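/- arXiv:2210.15193 — 2 statements merged into one kernel-verified Lean document; each statement's English description precedes it below -/
import Mathlib

section
/- Let π be a possibility distribution on ℝⁿ satisfying Assumption 1, let ℓ be a positive integer, ε ∈ [0,1), b ∈ ℝ, x ∈ ℝⁿ, and let g : ℝ → ℝ be a nondecreasing convex function. Then sup_{P ∈ P_π^ℓ} CVaR_P^ε[g(ãᵀx)] ≤ b holds if and only if there exists t ∈ ℝ such that sup_{P ∈ P_π^ℓ} ∫_{C(0)} max(g(aᵀx) − t, 0) dP(a) ≤ (b − t)(1 − ε). -/
/-!
The direction `←` is the bound `CVaR ≤ t + E[(X - t)⁺] / (1 - ε)` for each `P`. For `→`, let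
`A i` maximise `aᵀx` on the cut `C(i/ℓ)`, `i < ℓ`. The uniform measure on `A 0, …, A (ℓ - 1)` lies
in `P_π^ℓ` and is a worst case for every nondecreasing `φ` at once: `φ(aᵀx) ≤ φ((A i)ᵀx)` on
`C(i/ℓ)`, and `P(C(i/ℓ)) ≥ 1 - i/ℓ` lets an Abel summation bound `E_P[φ(ãᵀx)]` by the average of
the `φ((A i)ᵀx)`. As `g(ãᵀx)` is bounded, the infimum defining the CVaR of the worst-case measure
is attained at some `t`, and with `φ = (g - t)⁺` this `t` serves every `P`.
-/

open MeasureTheory Set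

/-- Conditional Value at Risk at level `ε` of the random variable `X` under `P`. -/
noncomputable def cvar {Ω : Type*} [MeasurableSpace Ω] (P : Measure Ω) (ε : ℝ) (X : Ω → ℝ) : ℝ :=
  ⨅ t : ℝ, (t + (1 / (1 - ε)) * ∫ a, max (X a - t) 0 ∂P)

/-- The discrete ambiguity set `P_π^ℓ`. -/
def ambiguitySet (n ℓ : ℕ) (C : ℝ → Set (Fin n → ℝ)) : Set (Measure (Fin n → ℝ)) :=
  {P | IsProbabilityMeasure P ∧
    ∀ i : Fin (ℓ + 1), ENNReal.ofReal (1 - ((i : ℕ) : ℝ) / ℓ) ≤ P (C (((i : ℕ) : ℝ) / ℓ))}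

section CVaR

variable {Ω : Type*} [MeasurableSpace Ω] {P : Measure Ω} {ε : ℝ} {X : Ω → ℝ}

noncomputable def cvarObjective (P : Measure Ω) (ε : ℝ) (X : Ω → ℝ) (t : ℝ) : ℝ :=
  t + (1 / (1 - ε)) * ∫ a, max (X a - t) 0 ∂P

lemma cvarObjective_le_iff (hε : ε < 1) {t b : ℝ} :
    cvarObjective P ε X t ≤ b ↔ ∫ a, max (X a - t) 0 ∂P ≤ (b - t) * (1 - ε) := by
  rw [cvarObjective, ← le_sub_iff_add_le', one_div_mul_eq_div, div_le_iff₀ (by linarith)]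

lemma integrable_of_ae_mem_Icc [IsFiniteMeasure P] (hXm : AEStronglyMeasurable X P) {m M : ℝ}
    (hXb : ∀ᵐ a ∂P, X a ∈ Icc m M) : Integrable X P :=
  Integrable.of_bound hXm (max |m| |M|) (hXb.mono fun _ ha => abs_le_max_abs_abs ha.1 ha.2)

variable [IsProbabilityMeasure P]

lemma integral_sub_const_of_isProbabilityMeasure (hX : Integrable X P) (t : ℝ) :
    ∫ a, (X a - t) ∂P = ∫ a, X a ∂P - t := by
  simp [integral_sub hX (integrable_const t)]

lemma integral_le_cvarObjective (hε : ε ∈ Ico (0 : ℝ) 1) (hX : Integrable X P) (t : ℝ) :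
    ∫ a, X a ∂P ≤ cvarObjective P ε X t := by
  have hc : 1 ≤ 1 / (1 - ε) := by rw [le_div_iff₀ (by linarith [hε.2])]; linarith [hε.1]
  have hpos : 0 ≤ ∫ a, max (X a - t) 0 ∂P := integral_nonneg fun _ => le_max_right _ _
  have hsub : ∫ a, X a ∂P - t ≤ ∫ a, max (X a - t) 0 ∂P := by
    rw [← integral_sub_const_of_isProbabilityMeasure hX]
    exact integral_mono (hX.sub (integrable_const t)) (hX.sub (integrable_const t)).pos_part
      fun _ => le_max_left _ _
  rw [cvarObjective]
  nlinarith

lemma cvar_le_cvarObjective (hε : ε ∈ Ico (0 : ℝ) 1) (hX : Integrable X P) (t : ℝ) :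
    cvar P ε X ≤ cvarObjective P ε X t :=
  ciInf_le ⟨_, forall_mem_range.2 (integral_le_cvarObjective hε hX)⟩ t

lemma lipschitzWith_integral_max_sub (hX : Integrable X P) :
    LipschitzWith 1 fun t => ∫ a, max (X a - t) 0 ∂P := by
  refine LipschitzWith.of_dist_le_mul fun t s => ?_
  have hint : ∀ r, Integrable (fun a => max (X a - r) 0) P :=
    fun r => (hX.sub (integrable_const r)).pos_part
  rw [Real.dist_eq, ← integral_sub (hint t) (hint s), NNReal.coe_one, one_mul, Real.dist_eq]
  have hbound : ∀ a, ‖max (X a - t) 0 - max (X a - s) 0‖ ≤ |t - s| := fun a =>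
    (abs_max_sub_max_le_abs _ _ 0).trans_eq (by rw [abs_sub_comm]; congr 1; ring)
  simpa using norm_integral_le_of_norm_le_const (μ := P) (Filter.Eventually.of_forall hbound)

lemma exists_forall_cvarObjective_le (hε : ε ∈ Ico (0 : ℝ) 1) (hX : Integrable X P)
    {m M : ℝ} (hXb : ∀ᵐ a ∂P, X a ∈ Icc m M) :
    ∃ t₀, ∀ t, cvarObjective P ε X t₀ ≤ cvarObjective P ε X t := by
  have hcont : Continuous (cvarObjective P ε X) :=
    continuous_id.add (continuous_const.mul (lipschitzWith_integral_max_sub hX).continuous)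
  obtain ⟨a, ha⟩ := hXb.exists
  obtain ⟨t₀, -, ht₀⟩ := isCompact_Icc.exists_isMinOn (nonempty_Icc.2 (ha.1.trans ha.2))
    hcont.continuousOn
  have hc : 1 ≤ 1 / (1 - ε) := by rw [le_div_iff₀ (by linarith [hε.2])]; linarith [hε.1]
  refine ⟨t₀, fun t => ?_⟩
  rcases le_or_gt t m with htm | hmt
  · have hlin : ∀ s ≤ m, cvarObjective P ε X s = s + 1 / (1 - ε) * (∫ a, X a ∂P - s) := by
      intro s hs
      rw [cvarObjective, ← integral_sub_const_of_isProbabilityMeasure hX]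
      congr 2
      exact integral_congr_ae (hXb.mono fun a ha => max_eq_left (by linarith [ha.1]))
    calc cvarObjective P ε X t₀ ≤ cvarObjective P ε X m := ht₀ ⟨le_rfl, ha.1.trans ha.2⟩
      _ ≤ cvarObjective P ε X t := by rw [hlin t htm, hlin m le_rfl]; nlinarith
  rcases le_or_gt t M with htM | hMt
  · exact ht₀ ⟨hmt.le, htM⟩
  · have hflat : ∀ s ≥ M, cvarObjective P ε X s = s := by
      intro s hs
      rw [cvarObjective, integral_eq_zero_of_ae (hXb.mono fun a ha => ?_), mul_zero, add_zero]
      exact max_eq_right (by linarith [ha.2])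
    calc cvarObjective P ε X t₀ ≤ cvarObjective P ε X M := ht₀ ⟨ha.1.trans ha.2, le_rfl⟩
      _ ≤ cvarObjective P ε X t := by rw [hflat M le_rfl, hflat t hMt.le]; exact hMt.le

lemma cvar_le_iff_exists_integral_le (hε : ε ∈ Ico (0 : ℝ) 1) (hX : Integrable X P)
    {m M : ℝ} (hXb : ∀ᵐ a ∂P, X a ∈ Icc m M) {b : ℝ} :
    cvar P ε X ≤ b ↔ ∃ t, ∫ a, max (X a - t) 0 ∂P ≤ (b - t) * (1 - ε) := by
  simp_rw [← cvarObjective_le_iff hε.2]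
  refine ⟨fun h => ?_, fun ⟨t, ht⟩ => (cvar_le_cvarObjective hε hX t).trans ht⟩
  obtain ⟨t₀, ht₀⟩ := exists_forall_cvarObjective_le hε hX hXb
  exact ⟨t₀, (le_ciInf ht₀).trans h⟩

end CVaR

section StepMajorant

open Finset

variable {Ω : Type*} (K : ℕ → Set Ω) (v : ℕ → ℝ)

-- For nested `K` this equals `v k` on `K k \ K (k + 1)`.
noncomputable def stepMajorant (m : ℕ) (a : Ω) : ℝ :=
  v 0 + ∑ i ∈ range m, (K (i + 1)).indicator (fun _ => v (i + 1) - v i) a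

variable {K v}

lemma le_stepMajorant {m : ℕ} (hv : ∀ i < m, v (i + 1) ≤ v i) (a : Ω) :
    v m ≤ stepMajorant K v m a := by
  rw [stepMajorant, ← sub_le_iff_le_add', ← sum_range_sub]
  refine sum_le_sum fun i hi => ?_
  by_cases ha : a ∈ K (i + 1)
  · rw [indicator_of_mem ha]
  · rw [indicator_of_notMem ha]
    exact sub_nonpos.2 (hv i (mem_range.1 hi))

lemma le_stepMajorant_of_le_on {m : ℕ} (hv : ∀ i < m, v (i + 1) ≤ v i) {a : Ω} (ha : a ∈ K 0)
    {y : ℝ} (hy : ∀ i ≤ m, a ∈ K i → y ≤ v i) : y ≤ stepMajorant K v m a := by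
  induction m with
  | zero => simpa [stepMajorant] using hy 0 le_rfl ha
  | succ m ih =>
    have ih := ih (fun i hi => hv i (by omega)) (fun i hi => hy i (by omega))
    rw [stepMajorant, sum_range_succ, ← add_assoc, ← stepMajorant]
    by_cases hm : a ∈ K (m + 1)
    · rw [indicator_of_mem hm]
      have hvm := le_stepMajorant (K := K) (m := m) (fun i hi => hv i (by omega)) a
      linarith [hy (m + 1) le_rfl hm]
    · rw [indicator_of_notMem hm, add_zero]
      exact ih

lemma sum_range_sub_mul_succ (m : ℕ) :
    ∑ i ∈ range m, (v (i + 1) - v i) * (i + 1 : ℝ) = m * v m - ∑ i ∈ range m, v i := by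
  induction m with
  | zero => simp
  | succ m ih => rw [sum_range_succ, ih, sum_range_succ]; push_cast; ring

end StepMajorant

section LevelDominance

open Finset

variable {Ω : Type*} [MeasurableSpace Ω]

lemma ae_mem_of_one_le_measureReal {P : Measure Ω} [IsProbabilityMeasure P] {s : Set Ω}
    (hs : MeasurableSet s) (h : 1 ≤ P.real s) : ∀ᵐ a ∂P, a ∈ s :=
  (mem_ae_iff_prob_eq_one hs).2 <| le_antisymm prob_le_one <| by
    rwa [← ENNReal.ofReal_one, ENNReal.ofReal_le_iff_le_toReal (measure_ne_top P s)]

theorem integral_le_sum_div_of_le_on_levels {P : Measure Ω} [IsProbabilityMeasure P] {ℓ : ℕ}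
    (hℓ : 0 < ℓ) {K : ℕ → Set Ω} (hKm : ∀ i < ℓ, MeasurableSet (K i))
    (hK : ∀ i < ℓ, 1 - (i : ℝ) / ℓ ≤ P.real (K i)) {v : ℕ → ℝ}
    (hv : ∀ i, i + 1 < ℓ → v (i + 1) ≤ v i) {f : Ω → ℝ} (hf : Integrable f P)
    (hfv : ∀ i < ℓ, ∀ a ∈ K i, f a ≤ v i) :
    ∫ a, f a ∂P ≤ (∑ i ∈ range ℓ, v i) / ℓ := by
  obtain ⟨m, rfl⟩ : ∃ m, ℓ = m + 1 := ⟨ℓ - 1, by omega⟩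
  have hKm' : ∀ i ∈ range m, MeasurableSet (K (i + 1)) :=
    fun i hi => hKm _ (by simp at hi; omega)
  have hint : ∀ i ∈ range m, Integrable ((K (i + 1)).indicator fun _ => v (i + 1) - v i) P :=
    fun i hi => (integrable_const _).indicator (hKm' i hi)
  have hK0 : ∀ᵐ a ∂P, a ∈ K 0 := ae_mem_of_one_le_measureReal (hKm 0 hℓ) (by simpa using hK 0 hℓ)
  have hmaj : ∀ᵐ a ∂P, f a ≤ stepMajorant K v m a := hK0.mono fun a ha =>
    le_stepMajorant_of_le_on (fun i hi => hv i (by omega)) ha fun i hi => hfv i (by omega) a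
  calc ∫ a, f a ∂P ≤ ∫ a, stepMajorant K v m a ∂P :=
        integral_mono_ae hf ((integrable_const _).add (integrable_finsetSum _ hint)) hmaj
    _ = v 0 + ∑ i ∈ range m, (v (i + 1) - v i) * P.real (K (i + 1)) := by
        simp only [stepMajorant]
        rw [integral_add (integrable_const _) (integrable_finsetSum _ hint),
          integral_finsetSum _ hint, integral_const, probReal_univ, one_smul]
        refine congrArg (v 0 + ·) (sum_congr rfl fun i hi => ?_)
        rw [integral_indicator_const _ (hKm' i hi), smul_eq_mul, mul_comm]
    _ ≤ v 0 + ∑ i ∈ range m, (v (i + 1) - v i) * (1 - ((i + 1 : ℕ) : ℝ) / (m + 1 : ℕ)) := by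
        refine add_le_add_right (sum_le_sum fun i hi => ?_) _
        exact mul_le_mul_of_nonpos_left (hK _ (by simp at hi; omega))
          (sub_nonpos.2 (hv i (by simp at hi; omega)))
    _ = (∑ i ∈ range (m + 1), v i) / (m + 1 : ℕ) := by
        have hsplit : ∑ i ∈ range m, (v (i + 1) - v i) * (1 - ((i + 1 : ℕ) : ℝ) / (m + 1 : ℕ))
            = ∑ i ∈ range m, (v (i + 1) - v i)
              - (∑ i ∈ range m, (v (i + 1) - v i) * (i + 1 : ℝ)) / (m + 1 : ℕ) := by
          rw [sum_div, ← sum_sub_distrib]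
          exact sum_congr rfl fun i _ => by push_cast; ring
        rw [hsplit, sum_range_sub, sum_range_sub_mul_succ, sum_range_succ]
        push_cast
        field_simp
        ring

end LevelDominance

section DiracAverage

open Finset

variable {Ω : Type*} [MeasurableSpace Ω]

noncomputable def diracAverage (A : ℕ → Ω) (ℓ : ℕ) : Measure Ω :=
  (ℓ : ENNReal)⁻¹ • ∑ i ∈ range ℓ, Measure.dirac (A i)

variable {A : ℕ → Ω} {ℓ : ℕ}

lemma diracAverage_apply (s : Set Ω) :
    diracAverage A ℓ s = (ℓ : ENNReal)⁻¹ * ∑ i ∈ range ℓ, Measure.dirac (A i) s := by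
  rw [diracAverage, Measure.smul_apply, Measure.finsetSum_apply, smul_eq_mul]

lemma isProbabilityMeasure_diracAverage (hℓ : ℓ ≠ 0) : IsProbabilityMeasure (diracAverage A ℓ) :=
  ⟨by simp [diracAverage_apply, ENNReal.inv_mul_cancel (Nat.cast_ne_zero.2 hℓ)]⟩

lemma integral_diracAverage [MeasurableSingletonClass Ω] (f : Ω → ℝ) :
    ∫ a, f a ∂diracAverage A ℓ = (∑ i ∈ range ℓ, f (A i)) / ℓ := by
  rw [diracAverage, integral_smul_measure,
    integral_finsetSum_measure fun i _ => integrable_dirac enorm_lt_top]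
  simp [integral_dirac, div_eq_inv_mul]

lemma ofReal_le_diracAverage_apply (hℓ : ℓ ≠ 0) {k : ℕ} (hk : k ≤ ℓ) {s : Set Ω}
    (hs : ∀ i, k ≤ i → i < ℓ → A i ∈ s) :
    ENNReal.ofReal (1 - (k : ℝ) / ℓ) ≤ diracAverage A ℓ s := by
  have hcount : ((ℓ - k : ℕ) : ENNReal) ≤ ∑ i ∈ range ℓ, Measure.dirac (A i) s :=
    calc ((ℓ - k : ℕ) : ENNReal) = ∑ i ∈ Ico k ℓ, Measure.dirac (A i) s := by
          rw [sum_congr rfl fun i hi => Measure.dirac_apply_of_mem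
            (hs i (mem_Ico.1 hi).1 (mem_Ico.1 hi).2)]
          simp
      _ ≤ ∑ i ∈ range ℓ, Measure.dirac (A i) s :=
          sum_le_sum_of_subset fun i hi => mem_range.2 (mem_Ico.1 hi).2
  have hfrac : (1 : ℝ) - k / ℓ = ((ℓ - k : ℕ) : ℝ) / ℓ := by
    rw [Nat.cast_sub hk]
    field_simp
  rw [diracAverage_apply, hfrac, ENNReal.ofReal_div_of_pos (by positivity), ENNReal.ofReal_natCast,
    ENNReal.ofReal_natCast, ENNReal.div_eq_inv_mul]
  gcongr

end DiracAverage

section PossibilityCuts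

variable {E : Type*} [TopologicalSpace E] {π : E → ℝ} {C : ℝ → Set E}

lemma cut_subset_cut (hcut : ∀ lam : ℝ, 0 < lam → C lam = {a | lam ≤ π a})
    (hsupp : C 0 = closure {a | 0 < π a}) {p q : ℝ} (hp : 0 ≤ p) (hpq : p ≤ q) : C q ⊆ C p := by
  rcases hp.eq_or_lt with rfl | hp
  · rcases hpq.eq_or_lt with rfl | hq
    · exact subset_rfl
    · rw [hcut q hq, hsupp]
      exact fun a ha => subset_closure (hq.trans_le ha)
  · rw [hcut p hp, hcut q (hp.trans_le hpq)]
    exact fun a ha => hpq.trans ha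

lemma exists_isMaxOn_cuts (hcut : ∀ lam : ℝ, 0 < lam → C lam = {a | lam ≤ π a})
    (hsupp : C 0 = closure {a | 0 < π a}) {ahat : E} (hnorm : π ahat = 1)
    (hcompact : IsCompact (C 0)) (hclosed : ∀ lam ∈ Icc (0 : ℝ) 1, IsClosed (C lam))
    {L : E → ℝ} (hL : Continuous L) (ℓ : ℕ) :
    ∃ A : ℕ → E, ∀ i < ℓ, A i ∈ C ((i : ℝ) / ℓ) ∧ IsMaxOn L (C ((i : ℝ) / ℓ)) (A i) := by
  have hmax : ∀ i, ∃ a, i < ℓ → a ∈ C ((i : ℝ) / ℓ) ∧ IsMaxOn L (C ((i : ℝ) / ℓ)) a := by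
    intro i
    by_cases hi : i < ℓ
    · have h0 : (0 : ℝ) ≤ i / ℓ := by positivity
      have h1 : (i : ℝ) / ℓ ≤ 1 := div_le_one_of_le₀ (by exact_mod_cast hi.le) (Nat.cast_nonneg _)
      have hahat : ahat ∈ C ((i : ℝ) / ℓ) :=
        cut_subset_cut hcut hsupp h0 h1 (by rw [hcut 1 one_pos]; exact hnorm.ge)
      obtain ⟨a, ha, hLa⟩ := (hcompact.of_isClosed_subset (hclosed _ ⟨h0, h1⟩)
        (cut_subset_cut hcut hsupp le_rfl h0)).exists_isMaxOn ⟨ahat, hahat⟩ hL.continuousOn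
      exact ⟨a, fun _ => ⟨ha, hLa⟩⟩
    · exact ⟨ahat, fun h => absurd h hi⟩
  choose A hA using hmax
  exact ⟨A, hA⟩

end PossibilityCuts

section AmbiguitySet

variable {n ℓ : ℕ} {C : ℝ → Set (Fin n → ℝ)} {P : Measure (Fin n → ℝ)}

lemma one_sub_div_le_measureReal (hP : P ∈ ambiguitySet n ℓ C) {i : ℕ} (hi : i ≤ ℓ) :
    1 - (i : ℝ) / ℓ ≤ P.real (C ((i : ℝ) / ℓ)) :=
  have := hP.1
  (ENNReal.ofReal_le_iff_le_toReal (measure_ne_top _ _)).1 (hP.2 ⟨i, Nat.lt_succ_of_le hi⟩)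

lemma ae_mem_cut_zero (hP : P ∈ ambiguitySet n ℓ C) (hC0 : MeasurableSet (C 0)) :
    ∀ᵐ a ∂P, a ∈ C 0 :=
  have := hP.1
  ae_mem_of_one_le_measureReal hC0 (by simpa using one_sub_div_le_measureReal hP (Nat.zero_le ℓ))

lemma diracAverage_mem_ambiguitySet (hℓ : 0 < ℓ)
    (hanti : ∀ ⦃p q : ℝ⦄, 0 ≤ p → p ≤ q → C q ⊆ C p) {A : ℕ → Fin n → ℝ}
    (hA : ∀ i < ℓ, A i ∈ C ((i : ℝ) / ℓ)) : diracAverage A ℓ ∈ ambiguitySet n ℓ C :=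
  ⟨isProbabilityMeasure_diracAverage hℓ.ne', fun j =>
    ofReal_le_diracAverage_apply hℓ.ne' (Nat.lt_succ_iff.1 j.2) fun i hji hi =>
      hanti (by positivity) (by gcongr) (hA i hi)⟩

theorem integral_le_integral_diracAverage (hℓ : 0 < ℓ)
    (hanti : ∀ ⦃p q : ℝ⦄, 0 ≤ p → p ≤ q → C q ⊆ C p)
    (hCm : ∀ i < ℓ, MeasurableSet (C ((i : ℝ) / ℓ))) {L : (Fin n → ℝ) → ℝ} {A : ℕ → Fin n → ℝ}
    (hA : ∀ i < ℓ, A i ∈ C ((i : ℝ) / ℓ) ∧ IsMaxOn L (C ((i : ℝ) / ℓ)) (A i))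
    {φ : ℝ → ℝ} (hφ : Monotone φ) (hP : P ∈ ambiguitySet n ℓ C)
    (hint : Integrable (fun a => φ (L a)) P) :
    ∫ a, φ (L a) ∂P ≤ ∫ a, φ (L a) ∂diracAverage A ℓ := by
  have := hP.1
  rw [integral_diracAverage]
  refine integral_le_sum_div_of_le_on_levels hℓ hCm
    (fun i hi => one_sub_div_le_measureReal hP hi.le) (fun i hi => hφ ?_) hint
    fun i hi a ha => hφ ((hA i hi).2 ha)
  exact (hA i (by omega)).2 (hanti (by positivity) (by gcongr; simp) (hA (i + 1) hi).1)

lemma exists_forall_mem_ambiguitySet_ae_mem_Icc (hcompact : IsCompact (C 0))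
    {L : (Fin n → ℝ) → ℝ} (hL : Continuous L) {g : ℝ → ℝ} (hg : Monotone g) :
    ∃ lo up : ℝ, ∀ P ∈ ambiguitySet n ℓ C, ∀ᵐ a ∂P, g (L a) ∈ Icc lo up := by
  obtain ⟨lo, hlo⟩ := hg.map_bddBelow (hcompact.bddBelow_image hL.continuousOn)
  obtain ⟨up, hup⟩ := hg.map_bddAbove (hcompact.bddAbove_image hL.continuousOn)
  exact ⟨lo, up, fun P hP => (ae_mem_cut_zero hP hcompact.isClosed.measurableSet).mono
    fun a ha => ⟨hlo (mem_image_of_mem g (mem_image_of_mem L ha)),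
      hup (mem_image_of_mem g (mem_image_of_mem L ha))⟩⟩

end AmbiguitySet

theorem cvar_constraint_iff_exists_t_general (n ℓ : ℕ) (hℓ : 1 ≤ ℓ)
    (π : (Fin n → ℝ) → ℝ)
    (C : ℝ → Set (Fin n → ℝ))
    (hcut : ∀ lam : ℝ, 0 < lam → C lam = {a | lam ≤ π a})
    (hsupp : C 0 = closure {a | 0 < π a})
    (ahat : Fin n → ℝ) (hnorm : π ahat = 1)
    (hcompact : IsCompact (C 0))
    (hclosed : ∀ lam ∈ Icc (0 : ℝ) 1, IsClosed (C lam))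
    (ε : ℝ) (hε : ε ∈ Ico (0 : ℝ) 1) (b : ℝ) (x : Fin n → ℝ)
    (g : ℝ → ℝ) (hg : Monotone g) :
    (∀ P ∈ ambiguitySet n ℓ C, cvar P ε (fun a => g (∑ j, a j * x j)) ≤ b)
    ↔ ∃ t : ℝ, ∀ P ∈ ambiguitySet n ℓ C,
        ∫ a, max (g (∑ j, a j * x j) - t) 0 ∂P ≤ (b - t) * (1 - ε) := by
  set L : (Fin n → ℝ) → ℝ := fun a => ∑ j, a j * x j
  have hL : Continuous L := by fun_prop
  have hanti := fun ⦃p q : ℝ⦄ => cut_subset_cut (p := p) (q := q) hcut hsupp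
  have hCm : ∀ i < ℓ, MeasurableSet (C ((i : ℝ) / ℓ)) := fun i hi => (hclosed _
    ⟨by positivity, div_le_one_of_le₀ (by exact_mod_cast hi.le) (Nat.cast_nonneg _)⟩).measurableSet
  obtain ⟨A, hA⟩ := exists_isMaxOn_cuts hcut hsupp hnorm hcompact hclosed hL ℓ
  have hPs := diracAverage_mem_ambiguitySet hℓ hanti fun i hi => (hA i hi).1
  obtain ⟨lo, up, hbdd⟩ := exists_forall_mem_ambiguitySet_ae_mem_Icc hcompact hL hg
  have hXint : ∀ P ∈ ambiguitySet n ℓ C, Integrable (fun a => g (L a)) P := fun P hP =>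
    have := hP.1
    integrable_of_ae_mem_Icc (hg.measurable.comp hL.measurable).aestronglyMeasurable (hbdd P hP)
  constructor
  · intro h
    have := hPs.1
    obtain ⟨t, ht⟩ := (cvar_le_iff_exists_integral_le hε (hXint _ hPs) (hbdd _ hPs)).1 (h _ hPs)
    have hφ : Monotone fun y => max (g y - t) 0 := fun y z hyz =>
      max_le_max_right 0 (sub_le_sub_right (hg hyz) t)
    refine ⟨t, fun P hP => ?_⟩
    have := hP.1
    exact (integral_le_integral_diracAverage hℓ hanti hCm hA hφ hP
      ((hXint P hP).sub (integrable_const t)).pos_part).trans ht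
  · rintro ⟨t, ht⟩ P hP
    have := hP.1
    exact (cvar_le_iff_exists_integral_le hε (hXint P hP) (hbdd P hP)).2 ⟨t, ht P hP⟩

/-- `sup_{P ∈ P_π^ℓ} CVaR_P^ε[g(ãᵀx)] ≤ b` iff there exists `t ∈ ℝ` with
`sup_{P ∈ P_π^ℓ} ∫_{C(0)} max(g(aᵀx) − t, 0) dP(a) ≤ (b − t)(1 − ε)`. -/
theorem cvar_constraint_iff_exists_t (n ℓ : ℕ) (hn : 1 ≤ n) (hℓ : 1 ≤ ℓ)
    (π : (Fin n → ℝ) → ℝ) (hrange : ∀ a, π a ∈ Icc (0 : ℝ) 1)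
    (C : ℝ → Set (Fin n → ℝ))
    (hcut : ∀ lam : ℝ, 0 < lam → C lam = {a | lam ≤ π a})
    (hsupp : C 0 = closure {a | 0 < π a})
    (ahat : Fin n → ℝ) (hnorm : π ahat = 1)
    (hcont : ContinuousOn π (C 0))
    (hcompact : IsCompact (C 0))
    (hclosed : ∀ lam ∈ Icc (0 : ℝ) 1, IsClosed (C lam))
    (hconvex : ∀ lam ∈ Icc (0 : ℝ) 1, Convex ℝ (C lam))
    (hint : ∀ lam ∈ Ico (0 : ℝ) 1, (interior (C lam)).Nonempty)
    (ε : ℝ) (hε : ε ∈ Ico (0 : ℝ) 1) (b : ℝ) (x : Fin n → ℝ)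
    (g : ℝ → ℝ) (hg : Monotone g) (hgconv : ConvexOn ℝ univ g) :
    (∀ P ∈ ambiguitySet n ℓ C, cvar P ε (fun a => g (∑ j, a j * x j)) ≤ b)
    ↔ ∃ t : ℝ, ∀ P ∈ ambiguitySet n ℓ C,
        ∫ a, max (g (∑ j, a j * x j) - t) 0 ∂P ≤ (b - t) * (1 - ε) :=
  cvar_constraint_iff_exists_t_general n ℓ hℓ π C hcut hsupp ahat hnorm hcompact hclosed ε hε b x g
    hg
end

section
/- Let π be a possibility distribution on ℝⁿ satisfying Assumption 1 whose cuts have the form C(λ_i) = {a ∈ ℝⁿ : a̲(λ_i) ≤ a ≤ ā(λ_i), ‖a − â‖₁ ≤ δ̄(λ_i)} for vectors a̲(λ_i) ≤ â ≤ ā(λ_i) and scalars δ̄(λ_i) ≥ 0, i ∈ Λ. Let ℓ be a positive integer, ε ∈ [0,1), b ∈ ℝ, x ∈ ℝⁿ. Then sup_{P ∈ P_π^ℓ} CVaR_P^ε[ãᵀx] ≤ b holds if and only if there exist w, t ∈ ℝ, reals v_i ≥ 0, γ_i ≥ 0, and nonnegative vectors α_i, β_i, φ_i, ξ_i ∈ ℝ₊ⁿ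 (i ∈ Λ) such that: w + Σ_{i∈Λ}(λ_i − 1)v_i ≤ (b − t)(1 − ε); w − Σ_{j≤i} v_j ≥ 0 for all i ∈ Λ; w − Σ_{j≤i} v_j + t ≥ ā(λ_i)ᵀα_i − a̲(λ_i)ᵀβ_i + âᵀ(φ_i − ξ_i) + δ̄(λ_i)γ_i for all i ∈ Λ; α_{ij} − β_{ij} + φ_{ij} − ξ_{ij} = x_j for all j ∈ [n], i ∈ Λ; and γ_i − φ_{ij} − ξ_{ij} ≥ 0 for all j ∈ [n], i ∈ Λ. -/
open MeasureTheory Set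

/-!
For each cut `C(λᵢ)`, a box intersected with an `ℓ₁`-ball around `â`, the linear function
`a ↦ aᵀx` attains its maximum `Vᵢ`, and a continuous-knapsack argument produces a dual
certificate `(αᵢ, βᵢ, φᵢ, ξᵢ, γᵢ)` of the same value; weak duality bounds `aᵀx` on `C(λᵢ)` by the
value of any feasible certificate.

If the linear system is solvable: the cuts are nested, so a point of `C(0)` lies in exactly the
cuts `C(λ₀), …, C(λₖ)` for some `k`, whence `max(aᵀx - t, 0) ≤ w - ∑ᵢ vᵢ 1_{C(λᵢ)}(a)`;
integrating against `P` and using `P(C(λᵢ)) ≥ 1 - λᵢ` bounds the CVaR objective at `t` by `b`.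

Conversely, the uniform distribution on maximisers in `C(λ₀), …, C(λ_{ℓ-1})` belongs to the
ambiguity set. Its CVaR is attained at some `t`, and the successive differences `vᵢ` of
`Nᵢ = max(Vᵢ - t, 0)` (with `w = N₀`) satisfy the budget constraint by Abel summation.
-/

open scoped ENNReal

theorem exists_knapsack_threshold {ι : Type*} [Fintype ι] (c r : ι → ℝ) {d : ℝ} (hd : 0 ≤ d) :
    ∃ γ, 0 ≤ γ ∧ ∑ j with γ < c j, r j ≤ d ∧ (0 < γ → d ≤ ∑ j with γ ≤ c j, r j) := by
  classical
  set A : Finset ℝ :=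
    insert 0 ((Finset.univ.filter fun j => d ≤ ∑ k with c j ≤ c k, r k).image c)
  have hA : A.Nonempty := ⟨0, Finset.mem_insert_self _ _⟩
  refine ⟨A.max' hA, A.le_max' 0 (Finset.mem_insert_self _ _), ?_, fun hpos => ?_⟩
  · by_contra! hlt
    have hne : (Finset.univ.filter fun k => A.max' hA < c k).Nonempty := by
      by_contra! hempty
      rw [hempty, Finset.sum_empty] at hlt
      linarith
    -- the smallest value above the threshold is itself a threshold candidate
    obtain ⟨j, hj, hjmin⟩ := Finset.exists_min_image _ c hne
    have hsame : (Finset.univ.filter fun k => c j ≤ c k) =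
        Finset.univ.filter fun k => A.max' hA < c k := by
      ext k
      simp only [Finset.mem_filter, Finset.mem_univ, true_and] at hj hjmin ⊢
      exact ⟨hj.trans_le, fun hk => hjmin k (by simpa using hk)⟩
    have hjA : c j ∈ A :=
      Finset.mem_insert_of_mem (Finset.mem_image_of_mem c (by simpa [hsame] using hlt.le))
    exact absurd (A.le_max' _ hjA) (not_le.mpr (Finset.mem_filter.mp hj).2)
  · obtain h0 | hmem := Finset.mem_insert.mp (A.max'_mem hA)
    · exact absurd h0 hpos.ne'
    · obtain ⟨j, hj, hjγ⟩ := Finset.mem_image.mp hmem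
      simpa [hjγ] using (Finset.mem_filter.mp hj).2

/-- Strong duality for the continuous knapsack problem: maximise `∑ c s` over `0 ≤ s ≤ r`,
`∑ s ≤ d`. -/
theorem exists_knapsack_solution_eq_dual {ι : Type*} [Fintype ι] (c r : ι → ℝ)
    (hr : ∀ j, 0 ≤ r j) {d : ℝ} (hd : 0 ≤ d) :
    ∃ (s : ι → ℝ) (γ : ℝ), 0 ≤ γ ∧ (∀ j, 0 ≤ s j ∧ s j ≤ r j) ∧ ∑ j, s j ≤ d ∧
      ∑ j, c j * s j = d * γ + ∑ j, r j * max (c j - γ) 0 := by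
  classical
  obtain ⟨γ, hγ, habove, hat⟩ := exists_knapsack_threshold c r hd
  set G := ∑ j with γ < c j, r j
  set T := ∑ j with c j = γ, r j
  have hT : 0 ≤ T := Finset.sum_nonneg fun j _ => hr j
  -- items strictly above the threshold are taken whole, items at the threshold by a common fraction
  obtain ⟨θ, ⟨hθ0, hθ1⟩, hθ⟩ : ∃ θ ∈ Set.Icc (0 : ℝ) 1, G + θ * T = min d (G + T) :=
    intermediate_value_Icc (f := fun θ => G + θ * T) zero_le_one (by fun_prop)
      ⟨by simpa using le_min habove (le_add_of_nonneg_right hT), by simp⟩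
  set s : ι → ℝ := fun j => if γ < c j then r j else if c j = γ then θ * r j else 0
  have hsum : ∑ j, s j = min d (G + T) := by
    rw [← hθ]
    simp only [G, T, s, Finset.sum_filter, Finset.mul_sum, ← Finset.sum_add_distrib]
    refine Finset.sum_congr rfl fun j _ => ?_
    split_ifs <;> grind
  have hslack : γ * ∑ j, s j = γ * d := by
    rcases hγ.eq_or_lt with h0 | hpos
    · simp [← h0]
    · rw [hsum, min_eq_left]
      have : ∑ j with γ ≤ c j, r j = G + T := by
        simp only [G, T, Finset.sum_filter, ← Finset.sum_add_distrib]
        refine Finset.sum_congr rfl fun j _ => ?_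
        split_ifs <;> grind
      linarith [hat hpos]
  refine ⟨s, γ, hγ, fun j => ?_, hsum ▸ min_le_left _ _, ?_⟩
  · simp only [s]
    split_ifs
    · exact ⟨hr j, le_rfl⟩
    · exact ⟨mul_nonneg hθ0 (hr j), mul_le_of_le_one_left (hr j) hθ1⟩
    · exact ⟨le_rfl, hr j⟩
  · have hcoord : ∀ j, c j * s j = γ * s j + r j * max (c j - γ) 0 := by
      intro j
      simp only [s]
      split_ifs with h1 h2
      · rw [max_eq_left (by linarith)]; ring
      · rw [h2, sub_self, max_self]; ring
      · rw [max_eq_right (by linarith [not_lt.mp h1])]; ring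
    rw [Finset.sum_congr rfl fun j _ => hcoord j, Finset.sum_add_distrib, ← Finset.mul_sum, hslack,
      mul_comm]

section BoxL1

variable {ι : Type*}

def boxL1Ball [Fintype ι] (lo hi ahat : ι → ℝ) (d : ℝ) : Set (ι → ℝ) :=
  {a | (∀ j, lo j ≤ a j ∧ a j ≤ hi j) ∧ ∑ j, |a j - ahat j| ≤ d}

structure IsBoxL1Dual (x α β φ ξ : ι → ℝ) (γ : ℝ) : Prop where
  γ_nonneg : 0 ≤ γ
  α_nonneg : ∀ j, 0 ≤ α j
  β_nonneg : ∀ j, 0 ≤ β j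
  φ_nonneg : ∀ j, 0 ≤ φ j
  ξ_nonneg : ∀ j, 0 ≤ ξ j
  sub_add_sub_eq : ∀ j, α j - β j + φ j - ξ j = x j
  sub_sub_nonneg : ∀ j, 0 ≤ γ - φ j - ξ j

def boxL1DualValue [Fintype ι] (lo hi ahat : ι → ℝ) (d : ℝ) (α β φ ξ : ι → ℝ) (γ : ℝ) : ℝ :=
  ∑ j, hi j * α j - ∑ j, lo j * β j + ∑ j, ahat j * (φ j - ξ j) + d * γ

theorem sum_mul_le_boxL1DualValue [Fintype ι] {lo hi ahat : ι → ℝ} {d : ℝ}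
    {a x α β φ ξ : ι → ℝ} {γ : ℝ} (ha : a ∈ boxL1Ball lo hi ahat d)
    (hdual : IsBoxL1Dual x α β φ ξ γ) :
    ∑ j, a j * x j ≤ boxL1DualValue lo hi ahat d α β φ ξ γ := by
  obtain ⟨hbox, hball⟩ := ha
  obtain ⟨hγ, hα, hβ, hφ, hξ, hx, hcap⟩ := hdual
  have hcoord : ∀ j, a j * x j ≤
      hi j * α j - lo j * β j + ahat j * (φ j - ξ j) + |a j - ahat j| * γ := by
    intro j
    have hdev : (a j - ahat j) * (φ j - ξ j) ≤ |a j - ahat j| * γ :=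
      calc (a j - ahat j) * (φ j - ξ j) ≤ |a j - ahat j| * |φ j - ξ j| :=
            (le_abs_self _).trans (abs_mul _ _).le
        _ ≤ |a j - ahat j| * γ := by
            gcongr
            exact abs_le.mpr ⟨by linarith [hφ j, hcap j], by linarith [hξ j, hcap j]⟩
    rw [← hx j]
    nlinarith [mul_le_mul_of_nonneg_right (hbox j).2 (hα j),
      mul_le_mul_of_nonneg_right (hbox j).1 (hβ j)]
  calc ∑ j, a j * x j
      ≤ ∑ j, (hi j * α j - lo j * β j + ahat j * (φ j - ξ j) + |a j - ahat j| * γ) :=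
        Finset.sum_le_sum fun j _ => hcoord j
    _ = ∑ j, hi j * α j - ∑ j, lo j * β j + ∑ j, ahat j * (φ j - ξ j)
          + (∑ j, |a j - ahat j|) * γ := by
        rw [Finset.sum_add_distrib, Finset.sum_add_distrib, Finset.sum_sub_distrib,
          Finset.sum_mul]
    _ ≤ boxL1DualValue lo hi ahat d α β φ ξ γ := by
        unfold boxL1DualValue
        gcongr

theorem max_sub_add_max_min {γ : ℝ} (hγ : 0 ≤ γ) (y : ℝ) :
    max (y - γ) 0 + max (min y γ) 0 = max y 0 := by
  simp only [max_def, min_def]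
  split_ifs <;> linarith

theorem isBoxL1Dual_of_nonneg {γ : ℝ} (hγ : 0 ≤ γ) (x : ι → ℝ) :
    IsBoxL1Dual x (fun j => max (x j - γ) 0) (fun j => max (-x j - γ) 0)
      (fun j => max (min (x j) γ) 0) (fun j => max (min (-x j) γ) 0) γ where
  γ_nonneg := hγ
  α_nonneg _ := le_max_right _ _
  β_nonneg _ := le_max_right _ _
  φ_nonneg _ := le_max_right _ _
  ξ_nonneg _ := le_max_right _ _
  sub_add_sub_eq j := by
    linear_combination max_sub_add_max_min hγ (x j) - max_sub_add_max_min hγ (-x j)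
      + max_zero_sub_max_neg_zero_eq_self (x j)
  sub_sub_nonneg j := by
    rcases le_total 0 (x j) with hx | hx
    · rw [max_eq_right (min_le_of_left_le (neg_nonpos.mpr hx))]
      linarith [max_le (min_le_right (x j) γ) hγ]
    · rw [max_eq_right (min_le_of_left_le hx)]
      linarith [max_le (min_le_right (-x j) γ) hγ]

theorem boxL1DualValue_of_nonneg [Fintype ι] (lo hi ahat : ι → ℝ) (d : ℝ) {γ : ℝ}
    (hγ : 0 ≤ γ) (x : ι → ℝ) :
    boxL1DualValue lo hi ahat d (fun j => max (x j - γ) 0) (fun j => max (-x j - γ) 0)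
        (fun j => max (min (x j) γ) 0) (fun j => max (min (-x j) γ) 0) γ =
      ∑ j, ahat j * x j + d * γ +
        ∑ j, (if 0 ≤ x j then hi j - ahat j else ahat j - lo j) * max (|x j| - γ) 0 := by
  have hcoord : ∀ j, hi j * max (x j - γ) 0 - lo j * max (-x j - γ) 0
      + ahat j * (max (min (x j) γ) 0 - max (min (-x j) γ) 0)
      = ahat j * x j +
        (if 0 ≤ x j then hi j - ahat j else ahat j - lo j) * max (|x j| - γ) 0 := by
    intro j
    rcases le_or_gt 0 (x j) with hx | hx
    · have hsplit := max_sub_add_max_min hγ (x j)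
      rw [max_eq_left hx] at hsplit
      rw [max_eq_right (show -x j - γ ≤ 0 by linarith),
        max_eq_right (min_le_of_left_le (neg_nonpos.mpr hx)), if_pos hx, abs_of_nonneg hx]
      linear_combination ahat j * hsplit
    · have hsplit := max_sub_add_max_min hγ (-x j)
      rw [max_eq_left (neg_nonneg.mpr hx.le)] at hsplit
      rw [max_eq_right (show x j - γ ≤ 0 by linarith), max_eq_right (min_le_of_left_le hx.le),
        if_neg hx.not_ge, abs_of_neg hx]
      linear_combination -ahat j * hsplit
  unfold boxL1DualValue
  rw [← Finset.sum_sub_distrib, ← Finset.sum_add_distrib,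
    Finset.sum_congr rfl fun j _ => hcoord j, Finset.sum_add_distrib]
  ring

theorem exists_mem_boxL1Ball_eq_boxL1DualValue [Fintype ι] {lo hi ahat : ι → ℝ} {d : ℝ}
    (hlo : ∀ j, lo j ≤ ahat j) (hhi : ∀ j, ahat j ≤ hi j) (hd : 0 ≤ d) (x : ι → ℝ) :
    ∃ a ∈ boxL1Ball lo hi ahat d, ∃ α β φ ξ γ, IsBoxL1Dual x α β φ ξ γ ∧
      boxL1DualValue lo hi ahat d α β φ ξ γ = ∑ j, a j * x j := by
  -- move from `ahat` towards the sign of `x`, by a continuous knapsack with values `|x j|`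
  set r : ι → ℝ := fun j => if 0 ≤ x j then hi j - ahat j else ahat j - lo j
  have hr : ∀ j, 0 ≤ r j := fun j => by
    simp only [r]; split_ifs <;> linarith [hlo j, hhi j]
  obtain ⟨s, γ, hγ, hs, hsd, hval⟩ := exists_knapsack_solution_eq_dual (fun j => |x j|) r hr hd
  set a : ι → ℝ := fun j => if 0 ≤ x j then ahat j + s j else ahat j - s j
  have hdev : ∀ j, |a j - ahat j| = s j := fun j => by
    simp only [a]; split_ifs <;> simp [abs_of_nonneg (hs j).1]
  have hbox : ∀ j, lo j ≤ a j ∧ a j ≤ hi j := fun j => by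
    have hsj := hs j
    by_cases hx : 0 ≤ x j
    · simp only [a, r, if_pos hx] at hsj ⊢; constructor <;> linarith [hlo j]
    · simp only [a, r, if_neg hx] at hsj ⊢; constructor <;> linarith [hhi j]
  have hax : ∀ j, a j * x j = ahat j * x j + |x j| * s j := fun j => by
    by_cases hx : 0 ≤ x j
    · simp only [a, if_pos hx, abs_of_nonneg hx]; ring
    · simp only [a, if_neg hx, abs_of_neg (not_le.mp hx)]; ring
  refine ⟨a, ⟨hbox, by simpa only [hdev] using hsd⟩, _, _, _, _, γ, isBoxL1Dual_of_nonneg hγ x,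
    ?_⟩
  rw [boxL1DualValue_of_nonneg lo hi ahat d hγ, Finset.sum_congr rfl fun j _ => hax j,
    Finset.sum_add_distrib, hval]
  ring

end BoxL1

theorem Continuous.exists_forall_le_of_antitoneOn_of_monotoneOn {f : ℝ → ℝ} (hf : Continuous f)
    {u U : ℝ} (hu : AntitoneOn f (Iic u)) (hU : MonotoneOn f (Ici U)) :
    ∃ t₀, ∀ t, f t₀ ≤ f t := by
  obtain ⟨t₀, -, ht₀⟩ := isCompact_Icc.exists_isMinOn (nonempty_Icc.mpr (le_max_left u U))
    hf.continuousOn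
  refine ⟨t₀, fun t => ?_⟩
  rcases le_total t u with htu | hut
  · exact (ht₀ ⟨le_rfl, le_max_left u U⟩).trans (hu htu self_mem_Iic htu)
  rcases le_total t (max u U) with htU | hUt
  · exact ht₀ ⟨hut, htU⟩
  · exact (ht₀ ⟨le_max_left u U, le_rfl⟩).trans
      (hU (le_max_right u U) ((le_max_right u U).trans hUt) hUt)

theorem exists_forall_add_mul_sum_max_le {ι : Type*} (s : Finset ι) (y : ι → ℝ) {c : ℝ}
    (hc : 1 ≤ c * s.card) :
    ∃ t₀, ∀ t, t₀ + c * ∑ i ∈ s, max (y i - t₀) 0 ≤ t + c * ∑ i ∈ s, max (y i - t) 0 := by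
  set B := ∑ i ∈ s, |y i|
  have hB : ∀ i ∈ s, |y i| ≤ B := fun i hi =>
    Finset.single_le_sum (fun j _ => abs_nonneg (y j)) hi
  refine Continuous.exists_forall_le_of_antitoneOn_of_monotoneOn (u := -B) (U := B) (by fun_prop)
    (fun t ht t' ht' htt' => ?_) (fun t ht t' ht' htt' => ?_)
  · have hlin : ∀ τ ≤ -B, ∑ i ∈ s, max (y i - τ) 0 = ∑ i ∈ s, y i - s.card * τ := fun τ hτ => by
      rw [Finset.sum_congr rfl fun i hi => max_eq_left (by linarith [neg_abs_le (y i), hB i hi]),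
        Finset.sum_sub_distrib, Finset.sum_const, nsmul_eq_mul]
    rw [hlin t ht, hlin t' ht']
    nlinarith
  · have hzero : ∀ τ ≥ B, ∑ i ∈ s, max (y i - τ) 0 = 0 := fun τ hτ =>
      Finset.sum_eq_zero fun i hi => max_eq_right (by linarith [le_abs_self (y i), hB i hi])
    rw [hzero t ht, hzero t' ht']
    simpa using htt'

theorem Finset.sum_range_succ_sub_pred {G : Type*} [AddCommGroup G] (N : ℕ → G) (k : ℕ) :
    ∑ m ∈ range (k + 1), (N (m - 1) - N m) = N 0 - N k := by
  rw [sum_range_succ', Nat.zero_sub, sub_self, add_zero]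
  exact sum_range_sub' N k

theorem Finset.sum_range_succ_mul_sub_pred (N : ℕ → ℝ) (k : ℕ) :
    ∑ i ∈ range (k + 1), ((k : ℝ) - i) * (N (i - 1) - N i) = k * N 0 - ∑ m ∈ range k, N m := by
  induction k with
  | zero => simp
  | succ k ih =>
    have hsplit : ∀ i : ℕ, ((k + 1 : ℕ) - (i : ℝ)) * (N (i - 1) - N i)
        = ((k : ℝ) - i) * (N (i - 1) - N i) + (N (i - 1) - N i) := fun i => by push_cast; ring
    rw [sum_range_succ, sum_congr rfl fun i _ => hsplit i, sum_add_distrib, ih,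
      sum_range_succ_sub_pred, sum_range_succ]
    push_cast
    ring

theorem Fin.sum_Iic_eq_sum_range {M : Type*} [AddCommMonoid M] {ℓ : ℕ} (g : ℕ → M)
    (i : Fin (ℓ + 1)) :
    ∑ j ∈ Finset.Iic i, g j = ∑ m ∈ Finset.range (i + 1), g m := by
  rw [Nat.range_succ_eq_Iic, ← Fin.map_valEmbedding_Iic, Finset.sum_map]
  rfl

theorem exists_cumulative_decomposition {ℓ : ℕ} (hℓ : ℓ ≠ 0) (N : ℕ → ℝ)
    (hN : ∀ m m', m ≤ m' → m' ≤ ℓ → N m' ≤ N m) :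
    ∃ (w : ℝ) (v : Fin (ℓ + 1) → ℝ), (∀ i, 0 ≤ v i) ∧
      (∀ i, w - ∑ j ∈ Finset.Iic i, v j = N i) ∧
      w + ∑ i : Fin (ℓ + 1), (((i : ℕ) : ℝ) / ℓ - 1) * v i =
        (ℓ : ℝ)⁻¹ * ∑ m ∈ Finset.range ℓ, N m := by
  -- `v 0 = N 0 - N 0 = 0`, as `0 - 1 = 0` in `ℕ`
  refine ⟨N 0, fun i => N ((i : ℕ) - 1) - N i,
    fun i => sub_nonneg.mpr (hN _ _ (Nat.sub_le _ _) i.is_le), fun i => ?_, ?_⟩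
  · rw [Fin.sum_Iic_eq_sum_range (fun m => N (m - 1) - N m), Finset.sum_range_succ_sub_pred]
    ring
  · have hℓ' : (ℓ : ℝ) ≠ 0 := Nat.cast_ne_zero.mpr hℓ
    have hweights : ∀ i : ℕ, ((i : ℝ) / ℓ - 1) * (N (i - 1) - N i)
        = -(ℓ : ℝ)⁻¹ * (((ℓ : ℝ) - i) * (N (i - 1) - N i)) := fun i => by
      field_simp
      ring
    rw [Fin.sum_univ_eq_sum_range (fun i => ((i : ℝ) / ℓ - 1) * (N (i - 1) - N i)),
      Finset.sum_congr rfl fun i _ => hweights i, ← Finset.mul_sum,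
      Finset.sum_range_succ_mul_sub_pred]
    field_simp
    ring

theorem Antitone.exists_mem_iff_le {ι α : Type*} [LinearOrder ι] [Fintype ι] {K : ι → Set α}
    (hK : Antitone K) {a : α} {i₀ : ι} (ha : a ∈ K i₀) : ∃ k, ∀ i, a ∈ K i ↔ i ≤ k := by
  classical
  set S := Finset.univ.filter fun i => a ∈ K i
  have hne : S.Nonempty := ⟨i₀, by simpa [S] using ha⟩
  refine ⟨S.max' hne, fun i =>
    ⟨fun hi => S.le_max' i (by simpa [S] using hi), fun hi => hK hi ?_⟩⟩
  simpa [S] using S.max'_mem hne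

theorem max_sub_le_sub_sum_indicator {ι α : Type*} [LinearOrder ι] [Fintype ι]
    [LocallyFiniteOrderBot ι] {K : ι → Set α} (hK : Antitone K) {X : α → ℝ} {t w : ℝ}
    {v : ι → ℝ} (hX : ∀ i, ∀ a ∈ K i, X a ≤ w - ∑ j ∈ Finset.Iic i, v j + t)
    (hw : ∀ i, 0 ≤ w - ∑ j ∈ Finset.Iic i, v j) {a : α} {i₀ : ι} (ha : a ∈ K i₀) :
    max (X a - t) 0 ≤ w - ∑ i, v i * (K i).indicator 1 a := by
  classical
  obtain ⟨k, hk⟩ := hK.exists_mem_iff_le ha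
  have hsum : ∑ i, v i * (K i).indicator 1 a = ∑ i ∈ Finset.Iic k, v i := by
    calc ∑ i, v i * (K i).indicator 1 a = ∑ i, if i ∈ Finset.Iic k then v i else 0 :=
          Finset.sum_congr rfl fun i _ => by by_cases h : i ≤ k <;> simp [h, indicator, hk]
      _ = ∑ i ∈ Finset.Iic k, v i := by rw [Finset.sum_ite_mem, Finset.univ_inter]
  rw [hsum]
  exact max_le (by linarith [hX k a ((hk k).mpr le_rfl)]) (hw k)

theorem integral_max_sub_le {ι α : Type*} [MeasurableSpace α] [LinearOrder ι] [Fintype ι]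
    [LocallyFiniteOrderBot ι] {P : Measure α} [IsProbabilityMeasure P] {K : ι → Set α}
    (hK : Antitone K) (hKm : ∀ i, MeasurableSet (K i)) {X : α → ℝ} (hXi : Integrable X P)
    {t w : ℝ} {v : ι → ℝ} (hX : ∀ i, ∀ a ∈ K i, X a ≤ w - ∑ j ∈ Finset.Iic i, v j + t)
    (hw : ∀ i, 0 ≤ w - ∑ j ∈ Finset.Iic i, v j) {i₀ : ι} (hae : ∀ᵐ a ∂P, a ∈ K i₀) :
    ∫ a, max (X a - t) 0 ∂P ≤ w - ∑ i, v i * P.real (K i) := by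
  have hind : ∀ i, Integrable (fun a => v i * (K i).indicator 1 a) P := fun i =>
    ((integrable_const 1).indicator (hKm i)).const_mul (v i)
  calc ∫ a, max (X a - t) 0 ∂P ≤ ∫ a, (w - ∑ i, v i * (K i).indicator 1 a) ∂P :=
        integral_mono_ae (hXi.sub (integrable_const t)).pos_part
          ((integrable_const w).sub (integrable_finsetSum _ fun i _ => hind i))
          (hae.mono fun a ha => max_sub_le_sub_sum_indicator hK hX hw ha)
    _ = w - ∑ i, v i * P.real (K i) := by
        rw [integral_sub (integrable_const w) (integrable_finsetSum _ fun i _ => hind i),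
          integral_finsetSum _ fun i _ => hind i]
        simp [integral_const_mul, integral_indicator_one (hKm _)]

theorem cvar_le {Ω : Type*} [MeasurableSpace Ω] {P : Measure Ω} [IsProbabilityMeasure P]
    {ε : ℝ} (hε : ε ∈ Ico (0 : ℝ) 1) {X : Ω → ℝ} (hX : Integrable X P) (t : ℝ) :
    cvar P ε X ≤ t + (1 / (1 - ε)) * ∫ a, max (X a - t) 0 ∂P := by
  refine ciInf_le ⟨∫ a, X a ∂P, ?_⟩ t
  rintro _ ⟨s, rfl⟩
  have hpos := (hX.sub (integrable_const s)).pos_part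
  have hmean : ∫ a, X a ∂P - s ≤ ∫ a, max (X a - s) 0 ∂P := by
    calc ∫ a, X a ∂P - s = ∫ a, (X a - s) ∂P := by simp [integral_sub hX (integrable_const s)]
      _ ≤ ∫ a, max (X a - s) 0 ∂P :=
        integral_mono (hX.sub (integrable_const s)) hpos fun a => le_max_left _ _
  have hc : 1 ≤ 1 / (1 - ε) := by rw [le_div_iff₀ (by linarith [hε.2])]; linarith [hε.1]
  have h0 : 0 ≤ ∫ a, max (X a - s) 0 ∂P := integral_nonneg fun a => le_max_right _ _
  nlinarith

noncomputable def empiricalMeasure {α : Type*} [MeasurableSpace α] (ℓ : ℕ) (p : ℕ → α) :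
    Measure α :=
  (ℓ : ℝ≥0∞)⁻¹ • ∑ m ∈ Finset.range ℓ, Measure.dirac (p m)

section empiricalMeasure

variable {α : Type*} [MeasurableSpace α] {ℓ : ℕ} {p : ℕ → α}

theorem empiricalMeasure_apply (S : Set α) :
    empiricalMeasure ℓ p S = (ℓ : ℝ≥0∞)⁻¹ * ∑ m ∈ Finset.range ℓ, Measure.dirac (p m) S := by
  simp [empiricalMeasure, Measure.finsetSum_apply]

theorem isProbabilityMeasure_empiricalMeasure (hℓ : ℓ ≠ 0) :
    IsProbabilityMeasure (empiricalMeasure ℓ p) :=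
  ⟨by simp [empiricalMeasure_apply, ENNReal.inv_mul_cancel (Nat.cast_ne_zero.mpr hℓ)]⟩

theorem ofReal_le_empiricalMeasure_apply (hℓ : ℓ ≠ 0) {k : ℕ} {S : Set α}
    (hS : ∀ m ∈ Finset.Ico k ℓ, p m ∈ S) :
    ENNReal.ofReal (1 - k / ℓ) ≤ empiricalMeasure ℓ p S := by
  have hℓ' : (0 : ℝ) < ℓ := by positivity
  calc ENNReal.ofReal (1 - k / ℓ) ≤ ENNReal.ofReal ((ℓ - k : ℕ) / ℓ) := by
        gcongr
        rw [le_div_iff₀ hℓ', sub_mul, div_mul_cancel₀ _ hℓ'.ne', one_mul]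
        rcases le_total k ℓ with h | h
        · rw [Nat.cast_sub h]
        · rw [Nat.sub_eq_zero_of_le h, Nat.cast_zero, sub_nonpos]; exact_mod_cast h
    _ = (ℓ : ℝ≥0∞)⁻¹ * ∑ m ∈ Finset.Ico k ℓ, 1 := by
        rw [ENNReal.ofReal_div_of_pos hℓ', ENNReal.div_eq_inv_mul]
        simp
    _ ≤ (ℓ : ℝ≥0∞)⁻¹ * ∑ m ∈ Finset.range ℓ, Measure.dirac (p m) S := by
        gcongr
        calc ∑ m ∈ Finset.Ico k ℓ, (1 : ℝ≥0∞) = ∑ m ∈ Finset.Ico k ℓ, Measure.dirac (p m) S :=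
              Finset.sum_congr rfl fun m hm => (Measure.dirac_apply_of_mem (hS m hm)).symm
          _ ≤ ∑ m ∈ Finset.range ℓ, Measure.dirac (p m) S :=
              Finset.sum_le_sum_of_subset fun m hm =>
                Finset.mem_range.mpr (Finset.mem_Ico.mp hm).2
    _ = empiricalMeasure ℓ p S := (empiricalMeasure_apply S).symm

theorem integral_empiricalMeasure [MeasurableSingletonClass α] (g : α → ℝ) :
    ∫ a, g a ∂empiricalMeasure ℓ p = (ℓ : ℝ)⁻¹ * ∑ m ∈ Finset.range ℓ, g (p m) := by
  rw [empiricalMeasure, integral_smul_measure,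
    integral_finsetSum_measure fun m _ => integrable_dirac enorm_lt_top]
  simp [integral_dirac]

end empiricalMeasure

theorem exists_le_cvar_empiricalMeasure {α : Type*} [MeasurableSpace α]
    [MeasurableSingletonClass α] {ℓ : ℕ} (hℓ : ℓ ≠ 0) {ε : ℝ} (hε : ε ∈ Ico (0 : ℝ) 1)
    (p : ℕ → α) (f : α → ℝ) :
    ∃ t, t + (1 / (1 - ε)) * ((ℓ : ℝ)⁻¹ * ∑ m ∈ Finset.range ℓ, max (f (p m) - t) 0) ≤
      cvar (empiricalMeasure ℓ p) ε f := by
  have hc : 1 ≤ 1 / (1 - ε) * (ℓ : ℝ)⁻¹ * (Finset.range ℓ).card := by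
    rw [Finset.card_range, mul_assoc, inv_mul_cancel₀ (Nat.cast_ne_zero.mpr hℓ), mul_one,
      le_div_iff₀ (by linarith [hε.2])]
    linarith [hε.1]
  obtain ⟨t₀, ht₀⟩ := exists_forall_add_mul_sum_max_le (Finset.range ℓ) (fun m => f (p m)) hc
  refine ⟨t₀, le_ciInf fun t => ?_⟩
  simpa only [integral_empiricalMeasure, mul_assoc] using ht₀ t

theorem antitoneOn_of_cut_eq {E : Type*} [TopologicalSpace E] {π : E → ℝ} {C : ℝ → Set E}
    (hcut : ∀ lam : ℝ, 0 < lam → C lam = {a | lam ≤ π a})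
    (hsupp : C 0 = closure {a | 0 < π a}) : AntitoneOn C (Ici 0) := by
  intro lam hlam lam' hlam' hle
  obtain rfl | hpos := (mem_Ici.mp hlam).eq_or_lt
  · obtain rfl | hpos' := (mem_Ici.mp hlam').eq_or_lt
    · exact le_rfl
    · rw [hcut _ hpos', hsupp]
      exact fun a ha => subset_closure (hpos'.trans_le ha)
  · rw [hcut _ hpos, hcut _ (hpos.trans_le hle)]
    exact fun a ha => hle.trans ha

open Fin.NatCast in
theorem exists_budget_of_forall_cvar_le {α : Type*} [MeasurableSpace α]
    [MeasurableSingletonClass α] {ℓ : ℕ} (hℓ : ℓ ≠ 0) {ε : ℝ} (hε : ε ∈ Ico (0 : ℝ) 1) {b : ℝ}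
    {K : Fin (ℓ + 1) → Set α} (hK : Antitone K) {f : α → ℝ} {pt : Fin (ℓ + 1) → α}
    (hpt : ∀ i, pt i ∈ K i) (hV : Antitone fun i => f (pt i))
    (hcvar : ∀ P : Measure α, IsProbabilityMeasure P →
      (∀ i : Fin (ℓ + 1), ENNReal.ofReal (1 - ((i : ℕ) : ℝ) / ℓ) ≤ P (K i)) → cvar P ε f ≤ b) :
    ∃ (w t : ℝ) (v : Fin (ℓ + 1) → ℝ), (∀ i, 0 ≤ v i) ∧
      w + ∑ i : Fin (ℓ + 1), (((i : ℕ) : ℝ) / ℓ - 1) * v i ≤ (b - t) * (1 - ε) ∧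
      (∀ i, 0 ≤ w - ∑ j ∈ Finset.Iic i, v j) ∧
      ∀ i, f (pt i) ≤ w - ∑ j ∈ Finset.Iic i, v j + t := by
  set p : ℕ → α := fun m => pt (m : Fin (ℓ + 1))
  have hle : ∀ {m m' : ℕ}, m ≤ m' → m' ≤ ℓ → (m : Fin (ℓ + 1)) ≤ m' := fun hmm' hm' => by
    rw [Fin.le_def, Fin.val_cast_of_lt (by omega), Fin.val_cast_of_lt (by omega)]
    exact hmm'
  have hP : ∀ i : Fin (ℓ + 1),
      ENNReal.ofReal (1 - ((i : ℕ) : ℝ) / ℓ) ≤ empiricalMeasure ℓ p (K i) := fun i =>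
    ofReal_le_empiricalMeasure_apply hℓ fun m hm => by
      have hm := Finset.mem_Ico.mp hm
      simpa using hK (hle hm.1 hm.2.le) (hpt m)
  obtain ⟨t, ht⟩ := exists_le_cvar_empiricalMeasure hℓ hε p f
  obtain ⟨w, v, hv, hcum, hbudget⟩ := exists_cumulative_decomposition hℓ
    (fun m => max (f (p m) - t) 0) fun m m' hmm' hm' => max_le_max_right 0 (by
      simpa using hV (hle hmm' hm'))
  refine ⟨w, t, v, hv, ?_, fun i => (hcum i).symm ▸ le_max_right _ _, fun i => ?_⟩
  · have := ht.trans (hcvar _ (isProbabilityMeasure_empiricalMeasure hℓ) hP)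
    rw [hbudget, ← div_le_iff₀ (by linarith [hε.2]), ← one_div_mul_eq_div]
    linarith
  · have := le_max_left (f (pt i) - t) 0
    simp only [hcum i, p, Fin.cast_val_eq_self]
    linarith

theorem cvar_le_of_budget {α : Type*} [MeasurableSpace α] {ℓ : ℕ} {ε : ℝ}
    (hε : ε ∈ Ico (0 : ℝ) 1) {b : ℝ} {K : Fin (ℓ + 1) → Set α} (hK : Antitone K)
    (hKm : ∀ i, MeasurableSet (K i)) {f : α → ℝ} (hfm : StronglyMeasurable f) {M : ℝ}
    (hfM : ∀ a ∈ K 0, ‖f a‖ ≤ M) {w t : ℝ} {v : Fin (ℓ + 1) → ℝ} (hv : ∀ i, 0 ≤ v i)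
    (hbudget : w + ∑ i : Fin (ℓ + 1), (((i : ℕ) : ℝ) / ℓ - 1) * v i ≤ (b - t) * (1 - ε))
    (hw : ∀ i, 0 ≤ w - ∑ j ∈ Finset.Iic i, v j)
    (hbound : ∀ i, ∀ a ∈ K i, f a ≤ w - ∑ j ∈ Finset.Iic i, v j + t)
    {P : Measure α} [IsProbabilityMeasure P]
    (hP : ∀ i : Fin (ℓ + 1), ENNReal.ofReal (1 - ((i : ℕ) : ℝ) / ℓ) ≤ P (K i)) :
    cvar P ε f ≤ b := by
  have hae : ∀ᵐ a ∂P, a ∈ K 0 := by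
    rw [ae_mem_iff_measure_eq (hKm 0).nullMeasurableSet, measure_univ]
    exact le_antisymm prob_le_one (by simpa using hP 0)
  have hf : Integrable f P := .of_bound hfm.aestronglyMeasurable M (hae.mono hfM)
  have hmass : ∀ i : Fin (ℓ + 1), 1 - ((i : ℕ) : ℝ) / ℓ ≤ P.real (K i) := fun i =>
    (ENNReal.ofReal_le_iff_le_toReal (measure_ne_top P _)).mp (hP i)
  have hmean : ∫ a, max (f a - t) 0 ∂P ≤ (b - t) * (1 - ε) :=
    calc ∫ a, max (f a - t) 0 ∂P ≤ w - ∑ i, v i * P.real (K i) :=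
          integral_max_sub_le hK hKm hf hbound hw hae
      _ ≤ w - ∑ i, v i * (1 - ((i : ℕ) : ℝ) / ℓ) :=
          sub_le_sub_left
            (Finset.sum_le_sum fun i _ => mul_le_mul_of_nonneg_left (hmass i) (hv i)) w
      _ ≤ (b - t) * (1 - ε) := by
          convert hbudget using 1
          rw [sub_eq_add_neg, ← Finset.sum_neg_distrib]
          congr 1
          exact Finset.sum_congr rfl fun i _ => by ring
  calc cvar P ε f ≤ t + (1 / (1 - ε)) * ∫ a, max (f a - t) 0 ∂P := cvar_le hε hf t
    _ ≤ t + (b - t) := by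
        gcongr
        rwa [one_div_mul_eq_div, div_le_iff₀ (by linarith [hε.2])]
    _ = b := add_sub_cancel t b

theorem cvar_constraint_iff_l1_general (n ℓ : ℕ) (hℓ : 1 ≤ ℓ)
    (π : (Fin n → ℝ) → ℝ)
    (C : ℝ → Set (Fin n → ℝ))
    (hcut : ∀ lam : ℝ, 0 < lam → C lam = {a | lam ≤ π a})
    (hsupp : C 0 = closure {a | 0 < π a})
    (ahat : Fin n → ℝ)
    (hcompact : IsCompact (C 0))
    (hclosed : ∀ lam ∈ Icc (0 : ℝ) 1, IsClosed (C lam))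
    -- the cuts have the box-plus-`L₁`-ball form
    (lo hi : Fin (ℓ + 1) → Fin n → ℝ) (d : Fin (ℓ + 1) → ℝ)
    (hlo : ∀ i j, lo i j ≤ ahat j) (hhi : ∀ i j, ahat j ≤ hi i j) (hd : ∀ i, 0 ≤ d i)
    (hform : ∀ i : Fin (ℓ + 1),
      C (((i : ℕ) : ℝ) / ℓ) =
        {a | (∀ j, lo i j ≤ a j ∧ a j ≤ hi i j) ∧ ∑ j, |a j - ahat j| ≤ d i})
    (ε : ℝ) (hε : ε ∈ Ico (0 : ℝ) 1) (b : ℝ) (x : Fin n → ℝ) :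
    (∀ P ∈ ambiguitySet n ℓ C, cvar P ε (fun a => ∑ j, a j * x j) ≤ b)
    ↔ ∃ (w t : ℝ) (v γ : Fin (ℓ + 1) → ℝ)
        (α β φ ξ : Fin (ℓ + 1) → Fin n → ℝ),
        (∀ i, 0 ≤ v i) ∧ (∀ i, 0 ≤ γ i) ∧
        (∀ i j, 0 ≤ α i j) ∧ (∀ i j, 0 ≤ β i j) ∧ (∀ i j, 0 ≤ φ i j) ∧
        (∀ i j, 0 ≤ ξ i j) ∧
        w + ∑ i : Fin (ℓ + 1), (((i : ℕ) : ℝ) / ℓ - 1) * v i ≤ (b - t) * (1 - ε) ∧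
        (∀ i : Fin (ℓ + 1), 0 ≤ w - ∑ j ∈ Finset.Iic i, v j) ∧
        (∀ i : Fin (ℓ + 1),
          ∑ j, hi i j * α i j - ∑ j, lo i j * β i j + ∑ j, ahat j * (φ i j - ξ i j)
            + d i * γ i ≤ w - ∑ j ∈ Finset.Iic i, v j + t) ∧
        (∀ i j, α i j - β i j + φ i j - ξ i j = x j) ∧
        (∀ i j, 0 ≤ γ i - φ i j - ξ i j) := by
  set f : (Fin n → ℝ) → ℝ := fun a => ∑ j, a j * x j
  have hgrid : ∀ i : Fin (ℓ + 1), ((i : ℕ) : ℝ) / ℓ ∈ Icc (0 : ℝ) 1 := fun i =>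
    ⟨by positivity, div_le_one_of_le₀ (by exact_mod_cast i.is_le) (Nat.cast_nonneg ℓ)⟩
  have hK : Antitone fun i : Fin (ℓ + 1) => C (((i : ℕ) : ℝ) / ℓ) := fun i k hik =>
    antitoneOn_of_cut_eq hcut hsupp (hgrid i).1 (hgrid k).1 (by gcongr; exact hik)
  have hweak : ∀ (i : Fin (ℓ + 1)) {α β φ ξ γ}, IsBoxL1Dual x α β φ ξ γ →
      ∀ a ∈ C (((i : ℕ) : ℝ) / ℓ), f a ≤ boxL1DualValue (lo i) (hi i) ahat (d i) α β φ ξ γ :=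
    fun i _ _ _ _ _ hdual a ha =>
    sum_mul_le_boxL1DualValue (by rwa [hform i] at ha) hdual
  constructor
  · intro H
    choose pt hpt α β φ ξ γ hdual hval using fun i =>
      exists_mem_boxL1Ball_eq_boxL1DualValue (hlo i) (hhi i) (hd i) x
    have hmem : ∀ i : Fin (ℓ + 1), pt i ∈ C (((i : ℕ) : ℝ) / ℓ) := fun i => by
      rw [hform i]
      exact hpt i
    have hV : Antitone fun i => f (pt i) := fun i k hik =>
      (hweak i (hdual i) _ (hK hik (hmem k))).trans_eq (hval i)
    obtain ⟨w, t, v, hv, hbudget, hw, hbound⟩ := exists_budget_of_forall_cvar_le (by omega) hε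
      hK hmem hV fun P hP hPK => H P ⟨hP, hPK⟩
    exact ⟨w, t, v, γ, α, β, φ, ξ, hv, fun i => (hdual i).γ_nonneg, fun i => (hdual i).α_nonneg,
      fun i => (hdual i).β_nonneg, fun i => (hdual i).φ_nonneg, fun i => (hdual i).ξ_nonneg,
      hbudget, hw, fun i => (hval i).trans_le (hbound i), fun i => (hdual i).sub_add_sub_eq,
      fun i => (hdual i).sub_sub_nonneg⟩
  · rintro ⟨w, t, v, γ, α, β, φ, ξ, hv, hγ, hα, hβ, hφ, hξ, hbudget, hw, hdom, hx, hcap⟩ P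
      ⟨hP, hPK⟩
    obtain ⟨M, hM⟩ := hcompact.exists_bound_of_continuousOn (f := f) (by fun_prop)
    exact cvar_le_of_budget hε hK (fun i => (hclosed _ (hgrid i)).measurableSet)
      (by fun_prop : Continuous f).stronglyMeasurable (by simpa using hM) hv hbudget hw
      (fun i a ha => (hweak i ⟨hγ i, hα i, hβ i, hφ i, hξ i, hx i, hcap i⟩ a ha).trans (hdom i))
      hPK

/-- Linear programming reformulation of the CVaR constraint for cuts given by a box
together with an `L₁`-norm (continuous budget) constraint. -/
theorem cvar_constraint_iff_l1 (n ℓ : ℕ) (hn : 1 ≤ n) (hℓ : 1 ≤ ℓ)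
    (π : (Fin n → ℝ) → ℝ) (hrange : ∀ a, π a ∈ Icc (0 : ℝ) 1)
    (C : ℝ → Set (Fin n → ℝ))
    (hcut : ∀ lam : ℝ, 0 < lam → C lam = {a | lam ≤ π a})
    (hsupp : C 0 = closure {a | 0 < π a})
    (ahat : Fin n → ℝ) (hnorm : π ahat = 1)
    (hcont : ContinuousOn π (C 0))
    (hcompact : IsCompact (C 0))
    (hclosed : ∀ lam ∈ Icc (0 : ℝ) 1, IsClosed (C lam))
    (hconvex : ∀ lam ∈ Icc (0 : ℝ) 1, Convex ℝ (C lam))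
    (hint : ∀ lam ∈ Ico (0 : ℝ) 1, (interior (C lam)).Nonempty)
    -- the cuts have the box-plus-`L₁`-ball form
    (lo hi : Fin (ℓ + 1) → Fin n → ℝ) (d : Fin (ℓ + 1) → ℝ)
    (hlo : ∀ i j, lo i j ≤ ahat j) (hhi : ∀ i j, ahat j ≤ hi i j) (hd : ∀ i, 0 ≤ d i)
    (hform : ∀ i : Fin (ℓ + 1),
      C (((i : ℕ) : ℝ) / ℓ) =
        {a | (∀ j, lo i j ≤ a j ∧ a j ≤ hi i j) ∧ ∑ j, |a j - ahat j| ≤ d i})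
    (ε : ℝ) (hε : ε ∈ Ico (0 : ℝ) 1) (b : ℝ) (x : Fin n → ℝ) :
    (∀ P ∈ ambiguitySet n ℓ C, cvar P ε (fun a => ∑ j, a j * x j) ≤ b)
    ↔ ∃ (w t : ℝ) (v γ : Fin (ℓ + 1) → ℝ)
        (α β φ ξ : Fin (ℓ + 1) → Fin n → ℝ),
        (∀ i, 0 ≤ v i) ∧ (∀ i, 0 ≤ γ i) ∧
        (∀ i j, 0 ≤ α i j) ∧ (∀ i j, 0 ≤ β i j) ∧ (∀ i j, 0 ≤ φ i j) ∧
        (∀ i j, 0 ≤ ξ i j) ∧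
        w + ∑ i : Fin (ℓ + 1), (((i : ℕ) : ℝ) / ℓ - 1) * v i ≤ (b - t) * (1 - ε) ∧
        (∀ i : Fin (ℓ + 1), 0 ≤ w - ∑ j ∈ Finset.Iic i, v j) ∧
        (∀ i : Fin (ℓ + 1),
          ∑ j, hi i j * α i j - ∑ j, lo i j * β i j + ∑ j, ahat j * (φ i j - ξ i j)
            + d i * γ i ≤ w - ∑ j ∈ Finset.Iic i, v j + t) ∧
        (∀ i j, α i j - β i j + φ i j - ξ i j = x j) ∧
        (∀ i j, 0 ≤ γ i - φ i j - ξ i j) :=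
  cvar_constraint_iff_l1_general n ℓ hℓ π C hcut hsupp ahat hcompact hclosed lo hi d hlo hhi hd
    hform ε hε b x
end
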